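/- arXiv:2112.08105 — 8 statements merged into one kernel-verified Lean document; each statement's English description precedes it below -/
import Mathlib

section
/- Let A ∈ L(X), B ∈ L(U,X), C ∈ L(X,Y), D ∈ L(U,Y) be bounded operators between complex Hilbert spaces such that the block operator (x,u) ↦ (Ax + Bu, Cx + Du) from X × U to X × Y is a contraction. Then for every z ∈ ℂ with |z| > 1, the operator zI − A is boundedly invertible and the transfer function satisfies ‖C(zI − A)⁻¹B + D‖ ≤ 1. -/
/-! With input `u` and state `x = (zI − A)⁻¹ B u`, the next state is `A x + B u = z x`, and the
output is `C x + D u = (C (zI − A)⁻¹ B + D) u`. Contractivity of the block operator gives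
`|z|² ‖x‖² + ‖C x + D u‖² ≤ ‖x‖² + ‖u‖²`, so `|z| ≥ 1` forces `‖C x + D u‖ ≤ ‖u‖`. Taking
`u = 0` shows `‖A‖ ≤ 1 < |z|`, which puts `z` in the resolvent set by a Neumann series. -/

open ContinuousLinearMap

section BlockContraction

variable {𝕜 U X Y : Type*} [NontriviallyNormedField 𝕜]
  [NormedAddCommGroup U] [NormedSpace 𝕜 U] [NormedAddCommGroup X] [NormedSpace 𝕜 X]
  [NormedAddCommGroup Y] [NormedSpace 𝕜 Y]
  {A : X →L[𝕜] X} {B : U →L[𝕜] X} {C : X →L[𝕜] Y} {D : U →L[𝕜] Y}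

theorem opNorm_le_one_of_block_contraction
    (hcontr : ∀ x u, ‖A x + B u‖ ^ 2 + ‖C x + D u‖ ^ 2 ≤ ‖x‖ ^ 2 + ‖u‖ ^ 2) : ‖A‖ ≤ 1 := by
  refine opNorm_le_bound A zero_le_one fun x => ?_
  have h := hcontr x 0
  simp only [map_zero, add_zero, norm_zero] at h
  rw [one_mul, ← pow_le_pow_iff_left₀ (norm_nonneg _) (norm_nonneg _) two_ne_zero]
  nlinarith [sq_nonneg ‖C x‖]

theorem norm_output_le_of_next_state_eq_smul
    (hcontr : ∀ x u, ‖A x + B u‖ ^ 2 + ‖C x + D u‖ ^ 2 ≤ ‖x‖ ^ 2 + ‖u‖ ^ 2)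
    {z : 𝕜} (hz : 1 ≤ ‖z‖) {x : X} {u : U} (hx : A x + B u = z • x) :
    ‖C x + D u‖ ≤ ‖u‖ := by
  have h := hcontr x u
  rw [hx, norm_smul, mul_pow] at h
  have hx_le : ‖x‖ ^ 2 ≤ ‖z‖ ^ 2 * ‖x‖ ^ 2 :=
    le_mul_of_one_le_left (sq_nonneg _) (one_le_pow₀ hz)
  rw [← pow_le_pow_iff_left₀ (norm_nonneg _) (norm_nonneg _) two_ne_zero]
  linarith

end BlockContraction

theorem apply_resolvent_add_eq_smul {𝕜 X : Type*} [NontriviallyNormedField 𝕜]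
    [NormedAddCommGroup X] [NormedSpace 𝕜 X] {A : X →L[𝕜] X} {z : 𝕜}
    (hz : z ∈ resolventSet 𝕜 A) (y : X) :
    A (resolvent A z y) + y = z • resolvent A z y := by
  have hinv : (algebraMap 𝕜 (X →L[𝕜] X) z - A) * resolvent A z = 1 :=
    Ring.mul_inverse_cancel _ hz
  have hy : z • resolvent A z y - A (resolvent A z y) = y := by
    simpa [Algebra.algebraMap_eq_smul_one] using congr($hinv y)
  exact (sub_eq_iff_eq_add'.mp hy).symm

theorem transfer_function_contractive_of_block_contraction_general
    {U X Y : Type*}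
    [NormedAddCommGroup X] [InnerProductSpace ℂ X] [CompleteSpace X]
    [NormedAddCommGroup U] [InnerProductSpace ℂ U]
    [NormedAddCommGroup Y] [InnerProductSpace ℂ Y]
    (A : X →L[ℂ] X) (B : U →L[ℂ] X) (C : X →L[ℂ] Y) (D : U →L[ℂ] Y)
    (hcontr : ∀ (x : X) (u : U),
      ‖A x + B u‖ ^ 2 + ‖C x + D u‖ ^ 2 ≤ ‖x‖ ^ 2 + ‖u‖ ^ 2)
    (z : ℂ) (hz : 1 < ‖z‖) :
    z ∈ resolventSet ℂ A ∧ ‖C ∘L resolvent A z ∘L B + D‖ ≤ 1 := by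
  have hA : ‖A‖ * ‖(1 : X →L[ℂ] X)‖ < ‖z‖ := by
    have := opNorm_le_one_of_block_contraction hcontr
    exact (mul_le_one₀ this (norm_nonneg _) norm_id_le).trans_lt hz
  have hres : z ∈ resolventSet ℂ A := spectrum.mem_resolventSet_of_norm_lt_mul hA
  refine ⟨hres, opNorm_le_bound _ zero_le_one fun u => ?_⟩
  rw [one_mul]
  exact norm_output_le_of_next_state_eq_smul hcontr hz.le (apply_resolvent_add_eq_smul hres (B u))

/-- If the block operator `(x,u) ↦ (Ax + Bu, Cx + Du)` is a contraction, then for every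
`z ∈ ℂ` with `|z| > 1`, `zI − A` is boundedly invertible and `‖C(zI − A)⁻¹B + D‖ ≤ 1`. -/
theorem transfer_function_contractive_of_block_contraction
    {U X Y : Type*}
    [NormedAddCommGroup X] [InnerProductSpace ℂ X] [CompleteSpace X]
    [NormedAddCommGroup U] [InnerProductSpace ℂ U] [CompleteSpace U]
    [NormedAddCommGroup Y] [InnerProductSpace ℂ Y] [CompleteSpace Y]
    (A : X →L[ℂ] X) (B : U →L[ℂ] X) (C : X →L[ℂ] Y) (D : U →L[ℂ] Y)
    (hcontr : ∀ (x : X) (u : U),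
      ‖A x + B u‖ ^ 2 + ‖C x + D u‖ ^ 2 ≤ ‖x‖ ^ 2 + ‖u‖ ^ 2)
    (z : ℂ) (hz : 1 < ‖z‖) :
    z ∈ resolventSet ℂ A ∧ ‖C ∘L resolvent A z ∘L B + D‖ ≤ 1 :=
  transfer_function_contractive_of_block_contraction_general A B C D hcontr z hz
end

section
/- Let A ∈ L(X), B ∈ L(U,X), C ∈ L(X,U), D ∈ L(U) be bounded operators on complex Hilbert spaces X and U satisfying the discrete impedance inequality ‖Ax + Bu‖² ≤ ‖x‖² + 2 Re⟨Cx + Du, u⟩ for all x ∈ X, u ∈ U. Then for every z ∈ ℂ with |z| > 1, the operator zI − A is boundedly invertible and the transfer function G_d(z) = C(zI − A)⁻¹B + D satisfies Re⟨G_d(z)u, u⟩ ≥ 0 for all u ∈ U. -/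
/-!
Taking `u = 0` in the impedance inequality gives `‖A‖ ≤ 1`, so every `z` with `|z| > 1` lies
in the resolvent set of `A`. For such `z` and any `u`, the state `x = (zI − A)⁻¹Bu` satisfies
`Ax + Bu = zx`, and the impedance inequality at `(x, u)` reads
`|z|²‖x‖² ≤ ‖x‖² + 2 Re⟨Cx + Du, u⟩`; since `|z|² ≥ 1` this forces `Re⟨G_d(z)u, u⟩ ≥ 0`.
-/

open scoped ComplexInnerProductSpace
open ContinuousLinearMap

section Resolvent

variable {𝕜 E : Type*} [NontriviallyNormedField 𝕜] [NormedAddCommGroup E] [NormedSpace 𝕜 E]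

theorem mem_resolventSet_of_opNorm_lt [CompleteSpace E] {A : E →L[𝕜] E} {z : 𝕜} (h : ‖A‖ < ‖z‖) :
    z ∈ resolventSet 𝕜 A :=
  spectrum.mem_resolventSet_of_norm_lt_mul <|
    (mul_le_of_le_one_right (norm_nonneg A) norm_id_le).trans_lt h

theorem smul_resolvent_apply_sub_apply {A : E →L[𝕜] E} {z : 𝕜} (hz : z ∈ resolventSet 𝕜 A)
    (y : E) : z • resolvent A z y - A (resolvent A z y) = y := by
  have hcancel : (algebraMap 𝕜 (E →L[𝕜] E) z - A) * resolvent A z = 1 :=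
    Ring.mul_inverse_cancel _ hz
  simpa [Algebra.algebraMap_eq_smul_one] using congrArg (· y) hcancel

end Resolvent

section Impedance

variable {U X : Type*}
  [NormedAddCommGroup X] [InnerProductSpace ℂ X]
  [NormedAddCommGroup U] [InnerProductSpace ℂ U]
  {A : X →L[ℂ] X} {B : U →L[ℂ] X} {C : X →L[ℂ] U} {D : U →L[ℂ] U}

theorem opNorm_le_one_of_impedance
    (himp : ∀ (x : X) (u : U), ‖A x + B u‖ ^ 2 ≤ ‖x‖ ^ 2 + 2 * (⟪C x + D u, u⟫).re) :
    ‖A‖ ≤ 1 := by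
  refine A.opNorm_le_bound zero_le_one fun x => ?_
  have h := himp x 0
  simp only [map_zero, add_zero, inner_zero_right, Complex.zero_re, mul_zero] at h
  rw [one_mul]
  exact pow_le_pow_iff_left₀ (norm_nonneg _) (norm_nonneg _) two_ne_zero |>.mp h

theorem re_inner_nonneg_of_impedance_of_add_eq_smul
    (himp : ∀ (x : X) (u : U), ‖A x + B u‖ ^ 2 ≤ ‖x‖ ^ 2 + 2 * (⟪C x + D u, u⟫).re)
    {z : ℂ} (hz : 1 ≤ ‖z‖) {x : X} {u : U} (hx : A x + B u = z • x) :
    0 ≤ (⟪C x + D u, u⟫).re := by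
  have h := himp x u
  rw [hx, norm_smul, mul_pow] at h
  have hz2 : 1 ≤ ‖z‖ ^ 2 := one_le_pow₀ hz
  nlinarith [sq_nonneg ‖x‖]

end Impedance

theorem transfer_function_positive_of_discrete_impedance_general
    {U X : Type*}
    [NormedAddCommGroup X] [InnerProductSpace ℂ X] [CompleteSpace X]
    [NormedAddCommGroup U] [InnerProductSpace ℂ U]
    (A : X →L[ℂ] X) (B : U →L[ℂ] X) (C : X →L[ℂ] U) (D : U →L[ℂ] U)
    (himp : ∀ (x : X) (u : U),
      ‖A x + B u‖ ^ 2 ≤ ‖x‖ ^ 2 + 2 * (⟪C x + D u, u⟫).re)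
    (z : ℂ) (hz : 1 < ‖z‖) :
    z ∈ resolventSet ℂ A ∧
      ∀ u : U, 0 ≤ (⟪(C ∘L resolvent A z ∘L B + D) u, u⟫).re := by
  have hres : z ∈ resolventSet ℂ A :=
    mem_resolventSet_of_opNorm_lt ((opNorm_le_one_of_impedance himp).trans_lt hz)
  refine ⟨hres, fun u => ?_⟩
  have hstate : A (resolvent A z (B u)) + B u = z • resolvent A z (B u) :=
    (sub_eq_iff_eq_add'.mp (smul_resolvent_apply_sub_apply hres (B u))).symm
  simpa using re_inner_nonneg_of_impedance_of_add_eq_smul himp hz.le hstate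

/-- If `(A,B,C,D)` satisfies the discrete impedance inequality, then for every `z ∈ ℂ` with
`|z| > 1`, `zI − A` is boundedly invertible and the transfer function
`G_d(z) = C(zI − A)⁻¹B + D` satisfies `Re⟨G_d(z)u, u⟩ ≥ 0` for all `u`. -/
theorem transfer_function_positive_of_discrete_impedance
    {U X : Type*}
    [NormedAddCommGroup X] [InnerProductSpace ℂ X] [CompleteSpace X]
    [NormedAddCommGroup U] [InnerProductSpace ℂ U] [CompleteSpace U]
    (A : X →L[ℂ] X) (B : U →L[ℂ] X) (C : X →L[ℂ] U) (D : U →L[ℂ] U)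
    (himp : ∀ (x : X) (u : U),
      ‖A x + B u‖ ^ 2 ≤ ‖x‖ ^ 2 + 2 * (⟪C x + D u, u⟫).re)
    (z : ℂ) (hz : 1 < ‖z‖) :
    z ∈ resolventSet ℂ A ∧
      ∀ u : U, 0 ≤ (⟪(C ∘L resolvent A z ∘L B + D) u, u⟫).re :=
  transfer_function_positive_of_discrete_impedance_general A B C D himp z hz
end

section
/- Let X, U, Y be complex Hilbert spaces, A ∈ L(X), B ∈ L(U,X), C ∈ L(X,Y), D ∈ L(U,Y), and let α ∈ ρ(A) with Re α > 0. Define the Cayley transform: A_d = (ᾱI + A)(αI − A)⁻¹, B_d = √(2 Re α)(αI − A)⁻¹B, C_d = √(2 Re α) C(αI − A)⁻¹, D_d = C(αI − A)⁻¹B + D. Let z ∈ ℂ with z ≠ −1 and suppose λ = (αz − ᾱ)/(z + 1) ∈ ρ(A). Then z ∈ ρ(A_d) and C_d(zI − A_d)⁻¹B_d + D_d = C(λI − A)⁻¹B + D. -/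
/-!
For `λ = (αz - ᾱ)/(z + 1)` one has `z - A_d = (z + 1)(λ - A)(α - A)⁻¹`, so `z ∈ ρ(A_d)` and
`(z - A_d)⁻¹ = (z + 1)⁻¹(α - A)(λ - A)⁻¹`. As `√(2 Re α)² = α + ᾱ = (z + 1)(α - λ)`, the product
`C_d (z - A_d)⁻¹ B_d` collapses to `(α - λ) C (λ - A)⁻¹(α - A)⁻¹ B`, which by the first resolvent
identity is `C (λ - A)⁻¹ B - C (α - A)⁻¹ B`; adding `D_d` gives the claim.
-/

open ContinuousLinearMap

namespace spectrum

section CommRing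

variable {R A : Type*} [CommRing R] [Ring A] [Algebra R A] {a : A} {r s : R}

theorem algebraMap_sub_mul_resolvent (hr : r ∈ resolventSet R a) :
    (algebraMap R A r - a) * resolvent a r = 1 :=
  Ring.mul_inverse_cancel _ hr

theorem resolvent_mul_algebraMap_sub (hr : r ∈ resolventSet R a) :
    resolvent a r * (algebraMap R A r - a) = 1 :=
  Ring.inverse_mul_cancel _ hr

theorem resolvent_sub_resolvent_eq_smul_mul (hr : r ∈ resolventSet R a)
    (hs : s ∈ resolventSet R a) :
    resolvent a s - resolvent a r = (r - s) • (resolvent a s * resolvent a r) := by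
  have hdiff : (algebraMap R A r - a) - (algebraMap R A s - a) = (r - s) • (1 : A) := by
    rw [sub_sub_sub_cancel_right, ← map_sub, Algebra.algebraMap_eq_smul_one]
  calc resolvent a s - resolvent a r
      = resolvent a s * ((algebraMap R A r - a) * resolvent a r)
          - resolvent a s * (algebraMap R A s - a) * resolvent a r := by
        rw [algebraMap_sub_mul_resolvent hr, resolvent_mul_algebraMap_sub hs, mul_one, one_mul]
    _ = resolvent a s * ((algebraMap R A r - a) - (algebraMap R A s - a)) * resolvent a r := by
        noncomm_ring
    _ = (r - s) • (resolvent a s * resolvent a r) := by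
        rw [hdiff, mul_smul_comm, mul_one, smul_mul_assoc]

end CommRing

variable {𝕜 A : Type*} [Field 𝕜] [Ring A] [Algebra 𝕜 A]

noncomputable def cayleyTransform (a : A) (α β : 𝕜) : A :=
  (algebraMap 𝕜 A β + a) * resolvent a α

variable {a : A} {α β z μ : 𝕜}

theorem algebraMap_sub_cayleyTransform (hα : α ∈ resolventSet 𝕜 a)
    (hμ : (z + 1) * μ = α * z - β) :
    algebraMap 𝕜 A z - cayleyTransform a α β
      = (z + 1) • ((algebraMap 𝕜 A μ - a) * resolvent a α) := by
  have hz : algebraMap 𝕜 A z = algebraMap 𝕜 A z * (algebraMap 𝕜 A α - a) * resolvent a α := by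
    rw [mul_assoc, algebraMap_sub_mul_resolvent hα, mul_one]
  rw [cayleyTransform, hz, ← sub_mul, ← smul_mul_assoc]
  congr 1
  simp only [Algebra.algebraMap_eq_smul_one, smul_sub, smul_mul_assoc, one_mul, smul_smul, hμ]
  match_scalars <;> ring

theorem mem_resolventSet_cayleyTransform (hα : α ∈ resolventSet 𝕜 a)
    (hμ_mem : μ ∈ resolventSet 𝕜 a) (hz : z + 1 ≠ 0) (hμ : (z + 1) * μ = α * z - β) :
    z ∈ resolventSet 𝕜 (cayleyTransform a α β) := by
  rw [mem_resolventSet_iff, algebraMap_sub_cayleyTransform hα hμ]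
  exact (hμ_mem.mul (isUnit_resolvent.mp hα)).smul (Units.mk0 _ hz)

theorem resolvent_cayleyTransform (hα : α ∈ resolventSet 𝕜 a)
    (hμ_mem : μ ∈ resolventSet 𝕜 a) (hz : z + 1 ≠ 0) (hμ : (z + 1) * μ = α * z - β) :
    resolvent (cayleyTransform a α β) z
      = (z + 1)⁻¹ • ((algebraMap 𝕜 A α - a) * resolvent a μ) := by
  rw [resolvent, ← mul_one (Ring.inverse _), Ring.inverse_mul_eq_iff_eq_mul _ _ _
    (mem_resolventSet_cayleyTransform hα hμ_mem hz hμ), algebraMap_sub_cayleyTransform hα hμ,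
    smul_mul_smul_comm, mul_inv_cancel₀ hz, one_smul, mul_assoc, ← mul_assoc (resolvent a α),
    resolvent_mul_algebraMap_sub hα, one_mul, algebraMap_sub_mul_resolvent hμ_mem]

theorem smul_resolvent_mul_resolvent_cayleyTransform_mul_resolvent (hα : α ∈ resolventSet 𝕜 a)
    (hμ_mem : μ ∈ resolventSet 𝕜 a) (hz : z + 1 ≠ 0) (hμ : (z + 1) * μ = α * z - β) :
    (α + β) • (resolvent a α * resolvent (cayleyTransform a α β) z * resolvent a α)
      = resolvent a μ - resolvent a α := by
  have hαμ : (α + β) * (z + 1)⁻¹ = α - μ := by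
    rw [eq_sub_iff_add_eq, ← mul_right_inj' hz]; field_simp; linear_combination hμ
  rw [resolvent_cayleyTransform hα hμ_mem hz hμ, resolvent_sub_resolvent_eq_smul_mul hα hμ_mem,
    ← hαμ, mul_smul_comm, smul_mul_assoc, smul_smul, ← mul_assoc (resolvent a α),
    resolvent_mul_algebraMap_sub hα, one_mul]

end spectrum

open spectrum in
/-- The transfer function of the (internal) Cayley transform at `z` equals the transfer
function of the original system at `λ = (αz − ᾱ)/(z + 1)`. -/
theorem cayley_transform_transfer_function
    {U X Y : Type*}
    [NormedAddCommGroup X] [InnerProductSpace ℂ X] [CompleteSpace X]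
    [NormedAddCommGroup U] [InnerProductSpace ℂ U] [CompleteSpace U]
    [NormedAddCommGroup Y] [InnerProductSpace ℂ Y] [CompleteSpace Y]
    (A : X →L[ℂ] X) (B : U →L[ℂ] X) (C : X →L[ℂ] Y) (D : U →L[ℂ] Y)
    (α : ℂ) (hα : α ∈ resolventSet ℂ A) (hre : 0 < α.re)
    (Ad : X →L[ℂ] X) (Bd : U →L[ℂ] X) (Cd : X →L[ℂ] Y) (Dd : U →L[ℂ] Y)
    (hAd : Ad = (algebraMap ℂ (X →L[ℂ] X) ((starRingEnd ℂ) α) + A) * resolvent A α)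
    (hBd : Bd = (Real.sqrt (2 * α.re) : ℂ) • (resolvent A α ∘L B))
    (hCd : Cd = (Real.sqrt (2 * α.re) : ℂ) • (C ∘L resolvent A α))
    (hDd : Dd = C ∘L resolvent A α ∘L B + D)
    (z : ℂ) (hz : z ≠ -1)
    (hlam : (α * z - (starRingEnd ℂ) α) / (z + 1) ∈ resolventSet ℂ A) :
    z ∈ resolventSet ℂ Ad ∧
      Cd ∘L resolvent Ad z ∘L Bd + Dd =
        C ∘L resolvent A ((α * z - (starRingEnd ℂ) α) / (z + 1)) ∘L B + D := by
  have hz1 : z + 1 ≠ 0 := fun h ↦ hz (eq_neg_of_add_eq_zero_left h)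
  have hμ := mul_div_cancel₀ (α * z - (starRingEnd ℂ) α) hz1
  obtain rfl : Ad = cayleyTransform A α ((starRingEnd ℂ) α) := hAd
  have hsqrt : (Real.sqrt (2 * α.re) : ℂ) * Real.sqrt (2 * α.re) = α + (starRingEnd ℂ) α := by
    rw [← Complex.ofReal_mul, Real.mul_self_sqrt (by positivity), Complex.add_conj]
  subst hBd hCd hDd
  refine ⟨mem_resolventSet_cayleyTransform hα hlam hz1 hμ, ?_⟩
  have hresolvent := smul_resolvent_mul_resolvent_cayleyTransform_mul_resolvent hα hlam hz1 hμ
  rw [eq_add_of_sub_eq' hresolvent.symm, ← hsqrt]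
  simp only [add_comp, comp_add, smul_comp, comp_smul, smul_smul, mul_def, comp_assoc]
  abel
end

section
/- Let X be a complex Hilbert space, A ∈ L(X) and α ∈ ρ(A) with Re α > 0, and let A_d = (ᾱI + A)(αI − A)⁻¹. Then the resolvent set of A_d is ρ(A_d) = { (ᾱ + λ)/(α − λ) : λ ∈ ρ(A), λ ≠ α } ∪ {−1}. -/
/-!
With `R = (α - a)⁻¹` and `B = (β + a) R`, right multiplication by the unit `α - a` gives
`(w - B)(α - a) = (wα - β) - (w + 1) a`. For `w = -1` this is the nonzero scalar `-(α + β)`; for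
`w ≠ -1` it is `(w + 1)(l - a)` with `l = (wα - β)/(w + 1)`, and `w ↦ l` is the inverse of the
Möbius map `l ↦ (β + l)/(α - l)` between `𝕜 ∖ {-1}` and `𝕜 ∖ {α}`.
-/

theorem mobius_eq_iff {𝕜 : Type*} [Field 𝕜] {α β w l : 𝕜} (hw : w ≠ -1) (hl : l ≠ α) :
    w = (β + l) / (α - l) ↔ l = (w * α - β) / (w + 1) := by
  have hw1 : w + 1 ≠ 0 := by contrapose! hw; linear_combination hw
  rw [eq_div_iff (sub_ne_zero.mpr hl.symm), eq_div_iff hw1]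
  constructor <;> intro h <;> linear_combination -h

theorem mul_sub_div_add_one_ne {𝕜 : Type*} [Field 𝕜] {α β w : 𝕜} (hαβ : α + β ≠ 0) (hw : w ≠ -1) :
    (w * α - β) / (w + 1) ≠ α := by
  have hw1 : w + 1 ≠ 0 := by contrapose! hw; linear_combination hw
  rw [ne_eq, div_eq_iff hw1]
  contrapose! hαβ
  linear_combination -hαβ

section Cayley

variable {𝕜 A : Type*} [Field 𝕜] [Ring A] [Algebra 𝕜 A]

/-- The paper's `A_d` is `cayley A α ᾱ`. -/
noncomputable def cayley (a : A) (α β : 𝕜) : A :=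
  (algebraMap 𝕜 A β + a) * resolvent a α

theorem sub_cayley_mul_sub {a : A} {α : 𝕜} (hα : α ∈ resolventSet 𝕜 a) (β w : 𝕜) :
    (algebraMap 𝕜 A w - cayley a α β) * (algebraMap 𝕜 A α - a) =
      algebraMap 𝕜 A (w * α - β) - algebraMap 𝕜 A (w + 1) * a := by
  have hcancel : resolvent a α * (algebraMap 𝕜 A α - a) = 1 :=
    Ring.inverse_mul_cancel _ (spectrum.mem_resolventSet_iff.mp hα)
  rw [sub_mul, cayley, mul_assoc, hcancel, mul_one, map_sub, map_mul, map_add, map_one]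
  noncomm_ring

theorem mem_resolventSet_cayley_iff {a : A} {α : 𝕜} (hα : α ∈ resolventSet 𝕜 a) (β w : 𝕜) :
    w ∈ resolventSet 𝕜 (cayley a α β) ↔
      IsUnit (algebraMap 𝕜 A (w * α - β) - algebraMap 𝕜 A (w + 1) * a) := by
  rw [spectrum.mem_resolventSet_iff, ← sub_cayley_mul_sub hα,
    IsUnit.mul_right_iff (spectrum.mem_resolventSet_iff.mp hα)]

theorem neg_one_mem_resolventSet_cayley {a : A} {α β : 𝕜} (hα : α ∈ resolventSet 𝕜 a)
    (hαβ : α + β ≠ 0) : -1 ∈ resolventSet 𝕜 (cayley a α β) := by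
  rw [mem_resolventSet_cayley_iff hα, neg_add_cancel, map_zero, zero_mul, sub_zero]
  exact (isUnit_iff_ne_zero.mpr (by contrapose! hαβ; linear_combination -hαβ)).map _

theorem mem_resolventSet_cayley_iff_of_ne {a : A} {α : 𝕜} (hα : α ∈ resolventSet 𝕜 a) (β : 𝕜)
    {w : 𝕜} (hw : w ≠ -1) :
    w ∈ resolventSet 𝕜 (cayley a α β) ↔ (w * α - β) / (w + 1) ∈ resolventSet 𝕜 a := by
  have hw1 : w + 1 ≠ 0 := by contrapose! hw; linear_combination hw
  have hscale : algebraMap 𝕜 A (w * α - β) =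
      algebraMap 𝕜 A (w + 1) * algebraMap 𝕜 A ((w * α - β) / (w + 1)) := by
    rw [← map_mul, mul_div_cancel₀ _ hw1]
  rw [mem_resolventSet_cayley_iff hα, hscale, ← mul_sub, spectrum.mem_resolventSet_iff,
    IsUnit.mul_left_iff ((isUnit_iff_ne_zero.mpr hw1).map _)]

end Cayley

theorem resolventSet_cayley_transform_general
    {X : Type*}
    [NormedAddCommGroup X] [InnerProductSpace ℂ X]
    (A : X →L[ℂ] X) (α : ℂ) (hα : α ∈ resolventSet ℂ A) (hre : 0 < α.re) :
    resolventSet ℂ ((algebraMap ℂ (X →L[ℂ] X) ((starRingEnd ℂ) α) + A) * resolvent A α) =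
      {w : ℂ | ∃ l ∈ resolventSet ℂ A, l ≠ α ∧ w = ((starRingEnd ℂ) α + l) / (α - l)} ∪
        {(-1 : ℂ)} := by
  have hαβ : α + (starRingEnd ℂ) α ≠ 0 := by
    rw [Complex.add_conj, ne_eq, Complex.ofReal_eq_zero]
    linarith
  change resolventSet ℂ (cayley A α _) = _
  ext w
  rcases eq_or_ne w (-1) with rfl | hw
  · simp [neg_one_mem_resolventSet_cayley hα hαβ]
  rw [mem_resolventSet_cayley_iff_of_ne hα _ hw]
  simp only [Set.mem_union, Set.mem_ofPred_eq, Set.mem_singleton_iff, hw, or_false]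
  constructor
  · intro h
    have hne := mul_sub_div_add_one_ne hαβ hw
    exact ⟨_, h, hne, (mobius_eq_iff hw hne).mpr rfl⟩
  · rintro ⟨l, hl, hlα, hwl⟩
    rwa [← (mobius_eq_iff hw hlα).mp hwl]

/-- The resolvent set of the Cayley transform `A_d = (ᾱI + A)(αI − A)⁻¹` is
`{(ᾱ + λ)/(α − λ) : λ ∈ ρ(A), λ ≠ α} ∪ {−1}`. -/
theorem resolventSet_cayley_transform
    {X : Type*}
    [NormedAddCommGroup X] [InnerProductSpace ℂ X] [CompleteSpace X]
    (A : X →L[ℂ] X) (α : ℂ) (hα : α ∈ resolventSet ℂ A) (hre : 0 < α.re) :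
    resolventSet ℂ ((algebraMap ℂ (X →L[ℂ] X) ((starRingEnd ℂ) α) + A) * resolvent A α) =
      {w : ℂ | ∃ l ∈ resolventSet ℂ A, l ≠ α ∧ w = ((starRingEnd ℂ) α + l) / (α - l)} ∪
        {(-1 : ℂ)} :=
  resolventSet_cayley_transform_general A α hα hre
end

section
/- Let α ∈ ℂ with Re α > 0, and for each k ∈ ℕ define φ_k : ℝ → ℂ by φ_k(ω) = (√(2 Re α)/(ᾱ + iω)) · ((α − iω)/(ᾱ + iω))^k. Then the family (φ_k) is orthonormal with respect to the inner product (1/(2π))∫_ℝ φ_j(ω) · conj(φ_k(ω)) dω; that is, this integral equals 1 if j = k and 0 if j ≠ k. -/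
/-!
Put `D(ω) = ᾱ + iω`. Then `α − iω = conj D(ω)`, so `w = (α − iω)/D` has modulus one and
`φ_j · conj φ_k = (2 Re α / |D|²) · w ^ (j − k)`, where `2 Re α / |D|² = 2π ρ` for the
density `ρ` of the Cauchy distribution with location `Im α` and scale `Re α`. It remains to see
that `∫ ρ w ^ n = δ_{n,0}` for `n : ℤ`, i.e. that `w` maps this Cauchy distribution to the uniform
distribution on the circle. For `n = 0` this is the normalisation of `ρ`. For `n ≠ 0`, the
logarithmic derivative of `w` is `−2πi ρ`, so `ρ w ^ n` is the derivative of
`i w ^ n / (2πn)`, which tends to the same value `i (−1) ^ n / (2πn)` at both ends of the real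
line.
-/

open MeasureTheory Complex Filter Topology ProbabilityTheory ComplexConjugate Real

theorem Complex.pow_mul_conj_pow_of_norm_eq_one {u : ℂ} (hu : ‖u‖ = 1) (j k : ℕ) :
    u ^ j * conj u ^ k = u ^ ((j : ℤ) - k) := by
  have hu₀ : u ≠ 0 := norm_ne_zero_iff.mp (by rw [hu]; exact one_ne_zero)
  rw [← inv_eq_conj hu, inv_pow, zpow_sub₀ hu₀, zpow_natCast, zpow_natCast, div_eq_mul_inv]

namespace Laguerre

noncomputable def denom (α : ℂ) (ω : ℝ) : ℂ := conj α + I * ω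

-- `blaschke α ω = -B(iω)` for the Blaschke factor `B(s) = (s - α) / (s + ᾱ)` of the right
-- half-plane.
noncomputable def blaschke (α : ℂ) (ω : ℝ) : ℂ := (α - I * ω) / denom α ω

noncomputable def basis (α : ℂ) (k : ℕ) (ω : ℝ) : ℂ :=
  (√(2 * α.re) : ℂ) / denom α ω * blaschke α ω ^ k

variable {α : ℂ}

theorem conj_denom (α : ℂ) (ω : ℝ) : conj (denom α ω) = α - I * ω := by
  simp [denom, sub_eq_add_neg]

theorem denom_re (α : ℂ) (ω : ℝ) : (denom α ω).re = α.re := by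
  simp [denom]

theorem denom_im (α : ℂ) (ω : ℝ) : (denom α ω).im = ω - α.im := by
  simp [denom]; ring

theorem normSq_denom (α : ℂ) (ω : ℝ) :
    normSq (denom α ω) = (ω - α.im) ^ 2 + α.re ^ 2 := by
  rw [normSq_apply, denom_re, denom_im]; ring

theorem denom_ne_zero (hα : α.re ≠ 0) (ω : ℝ) : denom α ω ≠ 0 :=
  fun h => hα (by rw [← denom_re α ω, h, zero_re])

theorem denom_add_conj_denom (α : ℂ) (ω : ℝ) :
    denom α ω + conj (denom α ω) = 2 * α.re := by
  rw [add_conj, denom_re]; push_cast; ring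

theorem blaschke_eq_conj_div (α : ℂ) (ω : ℝ) :
    blaschke α ω = conj (denom α ω) / denom α ω := by
  rw [blaschke, conj_denom]

theorem norm_blaschke (hα : α.re ≠ 0) (ω : ℝ) : ‖blaschke α ω‖ = 1 := by
  rw [blaschke_eq_conj_div, norm_div, RCLike.norm_conj, div_self]
  exact norm_ne_zero_iff.mpr (denom_ne_zero hα ω)

theorem blaschke_ne_zero (hα : α.re ≠ 0) (ω : ℝ) : blaschke α ω ≠ 0 :=
  norm_ne_zero_iff.mp (by rw [norm_blaschke hα]; exact one_ne_zero)

theorem continuous_blaschke (hα : α.re ≠ 0) : Continuous (blaschke α) :=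
  .div (by fun_prop) (by unfold denom; fun_prop) (denom_ne_zero hα)

theorem blaschke_eq_two_re_mul_inv_sub_one (hα : α.re ≠ 0) (ω : ℝ) :
    blaschke α ω = 2 * α.re * (denom α ω)⁻¹ - 1 := by
  rw [← denom_add_conj_denom, blaschke_eq_conj_div]
  field_simp [denom_ne_zero hα ω]
  ring

theorem cauchyPDFReal_eq (hα : 0 ≤ α.re) (ω : ℝ) :
    cauchyPDFReal α.im α.re.toNNReal ω = α.re / (π * normSq (denom α ω)) := by
  rw [cauchyPDFReal_def, Real.coe_toNNReal _ hα, normSq_denom]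
  field_simp

theorem basis_mul_conj_basis (hα : 0 < α.re) (j k : ℕ) (ω : ℝ) :
    basis α j ω * conj (basis α k ω) =
      2 * π * cauchyPDFReal α.im α.re.toNNReal ω * blaschke α ω ^ ((j : ℤ) - k) := by
  have hscale : (√(2 * α.re) : ℂ) / denom α ω * conj ((√(2 * α.re) : ℂ) / denom α ω) =
      2 * π * cauchyPDFReal α.im α.re.toNNReal ω := by
    rw [mul_conj, normSq_div, normSq_ofReal, Real.mul_self_sqrt (by linarith),
      cauchyPDFReal_eq hα.le]
    have hN : normSq (denom α ω) ≠ 0 := normSq_eq_zero.not.mpr (denom_ne_zero hα.ne' ω)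
    push_cast
    field_simp
  rw [← pow_mul_conj_pow_of_norm_eq_one (norm_blaschke hα.ne' ω), ← hscale, basis, basis,
    map_mul, map_pow]
  ring

theorem hasDerivAt_blaschke (hα : 0 < α.re) (ω : ℝ) :
    HasDerivAt (blaschke α)
      (-(2 * π * I) * cauchyPDFReal α.im α.re.toNNReal ω * blaschke α ω) ω := by
  have hD := denom_ne_zero hα.ne' ω
  have hD' : conj (denom α ω) ≠ 0 := (map_ne_zero _).mpr hD
  have hderiv : HasDerivAt (denom α) I ω :=
    (((hasDerivAt_id ω).ofReal_comp.const_mul I).const_add (conj α)).congr_deriv (mul_one I)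
  refine (((hderiv.inv hD).const_mul (2 * α.re : ℂ)).sub_const 1).congr_of_eventuallyEq
    (.of_forall fun ω => blaschke_eq_two_re_mul_inv_sub_one hα.ne' ω) |>.congr_deriv ?_
  rw [cauchyPDFReal_eq hα.le, blaschke_eq_conj_div]
  push_cast
  rw [← mul_conj]
  field_simp

theorem hasDerivAt_blaschke_zpow_div (hα : 0 < α.re) {n : ℤ} (hn : n ≠ 0) (ω : ℝ) :
    HasDerivAt (fun ω => I / (2 * π * n) * blaschke α ω ^ n)
      (cauchyPDFReal α.im α.re.toNNReal ω * blaschke α ω ^ n) ω := by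
  have hw := blaschke_ne_zero hα.ne' ω
  refine (((hasDerivAt_zpow n _ (.inl hw)).comp ω (hasDerivAt_blaschke hα ω)).const_mul
    (I / (2 * π * n))).congr_deriv ?_
  have hπ : (π : ℂ) ≠ 0 := ofReal_ne_zero.mpr pi_ne_zero
  rw [zpow_sub_one₀ hw]
  field_simp
  rw [I_sq]
  ring

theorem tendsto_denom_cocompact (α : ℂ) :
    Tendsto (denom α) (cocompact ℝ) (Bornology.cobounded ℂ) := by
  refine tendsto_norm_atTop_iff_cobounded.mp <|
    tendsto_atTop_mono (fun ω => ?_) (tendsto_dist_right_cocompact_atTop α.im)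
  rw [Real.dist_eq, ← denom_im]
  exact abs_im_le_norm _

theorem tendsto_blaschke_cocompact (hα : α.re ≠ 0) :
    Tendsto (blaschke α) (cocompact ℝ) (𝓝 (-1)) := by
  have h := ((tendsto_inv₀_cobounded.comp (tendsto_denom_cocompact α)).const_mul
    (2 * α.re : ℂ)).sub_const 1
  rw [mul_zero, zero_sub] at h
  exact h.congr fun ω => (blaschke_eq_two_re_mul_inv_sub_one hα ω).symm

theorem integrable_cauchyPDFReal_mul_blaschke_zpow (hα : α.re ≠ 0) (n : ℤ) :
    Integrable fun ω => (cauchyPDFReal α.im α.re.toNNReal ω : ℂ) * blaschke α ω ^ n := by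
  refine (integrable_cauchyPDFReal _).ofReal.mul_bdd ?_ (c := 1) (.of_forall fun ω => ?_)
  · exact ((continuous_blaschke hα).zpow₀ n
      fun ω => .inl (blaschke_ne_zero hα ω)).aestronglyMeasurable
  · rw [norm_zpow, norm_blaschke hα, one_zpow]

theorem integral_cauchyPDFReal_mul_blaschke_zpow (hα : 0 < α.re) (n : ℤ) :
    ∫ ω, (cauchyPDFReal α.im α.re.toNNReal ω : ℂ) * blaschke α ω ^ n =
      if n = 0 then 1 else 0 := by
  split_ifs with hn
  · simp_rw [hn, zpow_zero, mul_one]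
    rw [integral_complex_ofReal, integral_cauchyPDFReal_eq_one _ (by simpa using hα), ofReal_one]
  · have hlim := ((tendsto_blaschke_cocompact hα.ne').zpow₀ n (.inl (by norm_num))).const_mul
      (I / (2 * π * n))
    rw [integral_of_hasDerivAt_of_tendsto (hasDerivAt_blaschke_zpow_div hα hn)
      (integrable_cauchyPDFReal_mul_blaschke_zpow hα.ne' n) (hlim.mono_left atBot_le_cocompact)
      (hlim.mono_left atTop_le_cocompact), sub_self]

end Laguerre

/-- The functions `φ_k(ω) = (√(2 Re α)/(ᾱ + iω)) ((α − iω)/(ᾱ + iω))^k` form an orthonormal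
family with respect to the inner product `(1/(2π)) ∫_ℝ φ_j(ω) conj(φ_k(ω)) dω`. -/
theorem laguerre_family_orthonormal
    (α : ℂ) (hα : 0 < α.re) (j k : ℕ) :
    (1 / (2 * Real.pi) : ℂ) *
        ∫ ω : ℝ,
          (((Real.sqrt (2 * α.re) : ℂ) / ((starRingEnd ℂ) α + Complex.I * (ω : ℂ))) *
              ((α - Complex.I * (ω : ℂ)) / ((starRingEnd ℂ) α + Complex.I * (ω : ℂ))) ^ j) *
            (starRingEnd ℂ)
              (((Real.sqrt (2 * α.re) : ℂ) / ((starRingEnd ℂ) α + Complex.I * (ω : ℂ))) *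
                ((α - Complex.I * (ω : ℂ)) / ((starRingEnd ℂ) α + Complex.I * (ω : ℂ))) ^ k) =
      if j = k then 1 else 0 := by
  change (1 / (2 * π) : ℂ) * ∫ ω, Laguerre.basis α j ω * conj (Laguerre.basis α k ω) = _
  simp_rw [Laguerre.basis_mul_conj_basis hα, mul_assoc, integral_const_mul,
    Laguerre.integral_cauchyPDFReal_mul_blaschke_zpow hα, sub_eq_zero, Nat.cast_inj]
  have hπ : (π : ℂ) ≠ 0 := ofReal_ne_zero.mpr pi_ne_zero
  split_ifs <;> field_simp
end

section
/- Let X, U be complex Hilbert spaces and let (A,B,C,D) with A ∈ L(X), B ∈ L(U,X), C ∈ L(X,U), D ∈ L(U) satisfy the discrete impedance inequality ‖Ax + Bu‖² ≤ ‖x‖² + 2 Re⟨Cx + Du, u⟩ for all x ∈ X, u ∈ U. Let k > 0 and assume I + kD is boundedly invertible. Define A^s = A − kB(I + kD)⁻¹C, B^s = √(2k) B(I + kD)⁻¹, C^s = −√(2k) (I + kD)⁻¹C, D^s = (I − kD)(I + kD)⁻¹. Then the block operator (x,u) ↦ (A^s x + B^s u, C^s x + D^s u) on X × U is a contraction; i.e.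 the diagonal (external Cayley) transformation of an impedance passive discrete-time system is scattering passive. -/
/-!
Let `w = (I + kD)⁻¹ (√(2k) u - k C x)` and `y = C x + D w`: the pair `(w, y)` is the input/output
pair of the impedance system that corresponds to the scattering input `u`. Then
`A^s x + B^s u = A x + B w`, while `√(2k) u = w + k y` and `√(2k) (C^s x + D^s u) = w - k y`.
By polarization `‖u‖² - ‖C^s x + D^s u‖² = 2 Re ⟨y, w⟩`, and the impedance inequality at `(x, w)`
is exactly the scattering inequality at `(x, u)`.
-/

open scoped ComplexInnerProductSpace
open ContinuousLinearMap

section Polarization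

open scoped InnerProductSpace

variable {𝕜 E : Type*} [RCLike 𝕜] [NormedAddCommGroup E] [InnerProductSpace 𝕜 E]

theorem norm_add_smul_sq_sub_norm_sub_smul_sq (w y : E) (k : ℝ) :
    ‖w + (k : 𝕜) • y‖ ^ 2 - ‖w - (k : 𝕜) • y‖ ^ 2 = 4 * k * RCLike.re ⟪y, w⟫_𝕜 := by
  rw [@norm_add_sq 𝕜, @norm_sub_sq 𝕜, inner_smul_right, RCLike.re_ofReal_mul,
    ← inner_re_symm (𝕜 := 𝕜)]
  ring

theorem norm_sq_sub_norm_sq_eq_two_mul_re_inner {u v w y : E} {k s : ℝ} (hk : k ≠ 0)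
    (hs : s ^ 2 = 2 * k) (hu : (s : 𝕜) • u = w + (k : 𝕜) • y)
    (hv : (s : 𝕜) • v = w - (k : 𝕜) • y) :
    ‖u‖ ^ 2 - ‖v‖ ^ 2 = 2 * RCLike.re ⟪y, w⟫_𝕜 := by
  have h := norm_add_smul_sq_sub_norm_sub_smul_sq (𝕜 := 𝕜) w y k
  rw [← hu, ← hv, norm_smul, norm_smul, RCLike.norm_ofReal, mul_pow, mul_pow, sq_abs, hs] at h
  have hscaled : 2 * k * (‖u‖ ^ 2 - ‖v‖ ^ 2) = 2 * k * (2 * RCLike.re ⟪y, w⟫_𝕜) := by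
    linear_combination h
  exact mul_left_cancel₀ (by simpa using hk) hscaled

end Polarization

section CayleyTransform

variable {𝕜 X U : Type*} [RCLike 𝕜] [NormedAddCommGroup X] [NormedSpace 𝕜 X]
  [NormedAddCommGroup U] [NormedSpace 𝕜 U]
  {C : X →L[𝕜] U} {D E : U →L[𝕜] U} {c : 𝕜}

theorem apply_add_smul_apply_of_mul_eq_one (hE : (1 + c • D) * E = 1) (z : U) :
    E z + c • D (E z) = z := by
  simpa using congr($hE z)

theorem cayley_input_eq (hE : (1 + c • D) * E = 1) (s : 𝕜) (x : X) (u : U) :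
    s • u = E (s • u - c • C x) + c • (C x + D (E (s • u - c • C x))) := by
  have h := apply_add_smul_apply_of_mul_eq_one hE (s • u - c • C x)
  linear_combination (norm := module) -h

theorem cayley_output_eq (hE : (1 + c • D) * E = 1) {s : 𝕜} (hs : s * s = 2 * c)
    (x : X) (u : U) :
    s • (-(s • E (C x)) + (1 - c • D) (E u)) =
      E (s • u - c • C x) - c • (C x + D (E (s • u - c • C x))) := by
  have hCx := apply_add_smul_apply_of_mul_eq_one hE (C x)
  simp only [map_sub, map_smul, sub_apply, smul_apply, one_apply_eq_self]
  linear_combination (norm := module) (-c) • hCx - hs • E (C x)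

end CayleyTransform

theorem diagonal_transform_scattering_passive_general
    {X U : Type*}
    [NormedAddCommGroup X] [InnerProductSpace ℂ X]
    [NormedAddCommGroup U] [InnerProductSpace ℂ U]
    (A : X →L[ℂ] X) (B : U →L[ℂ] X) (C : X →L[ℂ] U) (D : U →L[ℂ] U)
    (himp : ∀ (x : X) (u : U),
      ‖A x + B u‖ ^ 2 ≤ ‖x‖ ^ 2 + 2 * (⟪C x + D u, u⟫).re)
    (k : ℝ) (hk : 0 < k)
    (hD : IsUnit (1 + (k : ℂ) • D))
    (As : X →L[ℂ] X) (Bs : U →L[ℂ] X) (Cs : X →L[ℂ] U) (Ds : U →L[ℂ] U)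
    (hAs : As = A - (k : ℂ) • (B ∘L Ring.inverse (1 + (k : ℂ) • D) ∘L C))
    (hBs : Bs = (Real.sqrt (2 * k) : ℂ) • (B ∘L Ring.inverse (1 + (k : ℂ) • D)))
    (hCs : Cs = -((Real.sqrt (2 * k) : ℂ) • (Ring.inverse (1 + (k : ℂ) • D) ∘L C)))
    (hDs : Ds = (1 - (k : ℂ) • D) * Ring.inverse (1 + (k : ℂ) • D)) :
    ∀ (x : X) (u : U),
      ‖As x + Bs u‖ ^ 2 + ‖Cs x + Ds u‖ ^ 2 ≤ ‖x‖ ^ 2 + ‖u‖ ^ 2 := by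
  intro x u
  set s := Real.sqrt (2 * k)
  have hs : s ^ 2 = 2 * k := Real.sq_sqrt (by positivity)
  have hs' : (s : ℂ) * s = 2 * k := by exact_mod_cast (sq s).symm.trans hs
  have hE := Ring.mul_inverse_cancel _ hD
  set E := Ring.inverse (1 + (k : ℂ) • D)
  set w := E ((s : ℂ) • u - (k : ℂ) • C x)
  have hstate : As x + Bs u = A x + B w := by
    simp only [hAs, hBs, w, sub_apply, smul_apply, comp_apply, map_sub, map_smul]
    module
  have hout : (s : ℂ) • (Cs x + Ds u) = w - (k : ℂ) • (C x + D w) := by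
    rw [hCs, hDs]
    exact cayley_output_eq hE hs' x u
  have hbalance : ‖u‖ ^ 2 - ‖Cs x + Ds u‖ ^ 2 = 2 * (⟪C x + D w, w⟫).re :=
    norm_sq_sub_norm_sq_eq_two_mul_re_inner hk.ne' hs (cayley_input_eq hE _ x u) hout
  rw [hstate]
  linarith [himp x w]

/-- The diagonal (external Cayley) transformation of an impedance passive discrete-time
system is scattering passive: the transformed block operator is a contraction. -/
theorem diagonal_transform_scattering_passive
    {X U : Type*}
    [NormedAddCommGroup X] [InnerProductSpace ℂ X] [CompleteSpace X]
    [NormedAddCommGroup U] [InnerProductSpace ℂ U] [CompleteSpace U]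
    (A : X →L[ℂ] X) (B : U →L[ℂ] X) (C : X →L[ℂ] U) (D : U →L[ℂ] U)
    (himp : ∀ (x : X) (u : U),
      ‖A x + B u‖ ^ 2 ≤ ‖x‖ ^ 2 + 2 * (⟪C x + D u, u⟫).re)
    (k : ℝ) (hk : 0 < k)
    (hD : IsUnit (1 + (k : ℂ) • D))
    (As : X →L[ℂ] X) (Bs : U →L[ℂ] X) (Cs : X →L[ℂ] U) (Ds : U →L[ℂ] U)
    (hAs : As = A - (k : ℂ) • (B ∘L Ring.inverse (1 + (k : ℂ) • D) ∘L C))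
    (hBs : Bs = (Real.sqrt (2 * k) : ℂ) • (B ∘L Ring.inverse (1 + (k : ℂ) • D)))
    (hCs : Cs = -((Real.sqrt (2 * k) : ℂ) • (Ring.inverse (1 + (k : ℂ) • D) ∘L C)))
    (hDs : Ds = (1 - (k : ℂ) • D) * Ring.inverse (1 + (k : ℂ) • D)) :
    ∀ (x : X) (u : U),
      ‖As x + Bs u‖ ^ 2 + ‖Cs x + Ds u‖ ^ 2 ≤ ‖x‖ ^ 2 + ‖u‖ ^ 2 :=
  diagonal_transform_scattering_passive_general A B C D himp k hk hD As Bs Cs Ds hAs hBs hCs hDs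
end

section
/- Let X, U be complex Hilbert spaces, A₀ ∈ L(X) with ker(I + A₀) = {0}, B₀ ∈ L(U,X), C₀ ∈ L(X,U), D₀ ∈ L(U), and k > 0 with I + kD₀ boundedly invertible. Define A^s = A₀ − kB₀(I + kD₀)⁻¹C₀, B^s = √(2k) B₀(I + kD₀)⁻¹, C^s = −√(2k) (I + kD₀)⁻¹C₀, D^s = (I − kD₀)(I + kD₀)⁻¹, and assume the block operator (x,u) ↦ (A^s x + B^s u, C^s x + D^s u) on X × U is a contraction. Then ker(I + A^s) = {0}, i.e. −1 is not an eigenvalue of A^s. -/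
/-!
If `x + A^s x = 0`, then `A^s` preserves the norm of `x`, so testing the contraction property
on `(x, 0)` forces `C^s x = 0`. Since `√(2k) ≠ 0`, this means `(I + kD₀)⁻¹ C₀ x = 0`, and then the
feedback term of `A^s` vanishes at `x`: `A^s x = A₀ x`. Hence `x + A₀ x = 0` and `x = 0`.
-/

open ContinuousLinearMap

section BlockContraction

variable {R X U : Type*} [Semiring R]
  [NormedAddCommGroup X] [Module R X] [NormedAddCommGroup U] [Module R U]

theorem ContinuousLinearMap.apply_eq_zero_of_blockContraction_of_norm_eq
    (A : X →L[R] X) (B : U →L[R] X) (C : X →L[R] U) (D : U →L[R] U)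
    (hcontr : ∀ (x : X) (u : U), ‖A x + B u‖ ^ 2 + ‖C x + D u‖ ^ 2 ≤ ‖x‖ ^ 2 + ‖u‖ ^ 2)
    {x : X} (hAx : ‖A x‖ = ‖x‖) : C x = 0 := by
  have h := hcontr x 0
  simp only [map_zero, add_zero, norm_zero, hAx] at h
  have hsq : ‖C x‖ ^ 2 = 0 := le_antisymm (by linarith) (sq_nonneg _)
  simpa using hsq

end BlockContraction

theorem neg_one_not_eigenvalue_of_diagonal_transform_general
    {X U : Type*}
    [NormedAddCommGroup X] [InnerProductSpace ℂ X]
    [NormedAddCommGroup U] [InnerProductSpace ℂ U]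
    (A₀ : X →L[ℂ] X) (B₀ : U →L[ℂ] X) (C₀ : X →L[ℂ] U) (D₀ : U →L[ℂ] U)
    (hker : ∀ x : X, x + A₀ x = 0 → x = 0)
    (k : ℝ) (hk : 0 < k)
    (As : X →L[ℂ] X) (Bs : U →L[ℂ] X) (Cs : X →L[ℂ] U) (Ds : U →L[ℂ] U)
    (hAs : As = A₀ - (k : ℂ) • (B₀ ∘L Ring.inverse (1 + (k : ℂ) • D₀) ∘L C₀))
    (hCs : Cs = -((Real.sqrt (2 * k) : ℂ) • (Ring.inverse (1 + (k : ℂ) • D₀) ∘L C₀)))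
    (hcontr : ∀ (x : X) (u : U),
      ‖As x + Bs u‖ ^ 2 + ‖Cs x + Ds u‖ ^ 2 ≤ ‖x‖ ^ 2 + ‖u‖ ^ 2) :
    ∀ x : X, x + As x = 0 → x = 0 := by
  intro x hx
  have hAsx : As x = -x := eq_neg_of_add_eq_zero_right hx
  have hCsx : Cs x = 0 :=
    As.apply_eq_zero_of_blockContraction_of_norm_eq Bs Cs Ds hcontr (by rw [hAsx, norm_neg])
  have hsqrt : (Real.sqrt (2 * k) : ℂ) ≠ 0 := by
    exact_mod_cast (Real.sqrt_pos.2 (by positivity)).ne'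
  have hfeedback : Ring.inverse (1 + (k : ℂ) • D₀) (C₀ x) = 0 := by
    simp only [hCs, neg_apply, smul_apply, comp_apply, neg_eq_zero, smul_eq_zero] at hCsx
    exact hCsx.resolve_left hsqrt
  have hA₀x : As x = A₀ x := by
    simp only [hAs, sub_apply, smul_apply, comp_apply, hfeedback, map_zero, smul_zero, sub_zero]
  exact hker x (hA₀x ▸ hx)

/-- If `−1` is not an eigenvalue of `A₀` and the diagonal-transformed block operator is a
contraction, then `−1` is not an eigenvalue of `A^s = A₀ − kB₀(I + kD₀)⁻¹C₀`. -/
theorem neg_one_not_eigenvalue_of_diagonal_transform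
    {X U : Type*}
    [NormedAddCommGroup X] [InnerProductSpace ℂ X] [CompleteSpace X]
    [NormedAddCommGroup U] [InnerProductSpace ℂ U] [CompleteSpace U]
    (A₀ : X →L[ℂ] X) (B₀ : U →L[ℂ] X) (C₀ : X →L[ℂ] U) (D₀ : U →L[ℂ] U)
    (hker : ∀ x : X, x + A₀ x = 0 → x = 0)
    (k : ℝ) (hk : 0 < k)
    (hD : IsUnit (1 + (k : ℂ) • D₀))
    (As : X →L[ℂ] X) (Bs : U →L[ℂ] X) (Cs : X →L[ℂ] U) (Ds : U →L[ℂ] U)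
    (hAs : As = A₀ - (k : ℂ) • (B₀ ∘L Ring.inverse (1 + (k : ℂ) • D₀) ∘L C₀))
    (hBs : Bs = (Real.sqrt (2 * k) : ℂ) • (B₀ ∘L Ring.inverse (1 + (k : ℂ) • D₀)))
    (hCs : Cs = -((Real.sqrt (2 * k) : ℂ) • (Ring.inverse (1 + (k : ℂ) • D₀) ∘L C₀)))
    (hDs : Ds = (1 - (k : ℂ) • D₀) * Ring.inverse (1 + (k : ℂ) • D₀))
    (hcontr : ∀ (x : X) (u : U),
      ‖As x + Bs u‖ ^ 2 + ‖Cs x + Ds u‖ ^ 2 ≤ ‖x‖ ^ 2 + ‖u‖ ^ 2) :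
    ∀ x : X, x + As x = 0 → x = 0 :=
  neg_one_not_eigenvalue_of_diagonal_transform_general A₀ B₀ C₀ D₀ hker k hk As Bs Cs Ds hAs hCs
    hcontr
end

section
/- Let X, U, Y be complex Hilbert spaces, A ∈ L(X), B ∈ L(U,X), C ∈ L(X,Y), D ∈ L(U,Y) and K ∈ L(Y,U) with I − DK boundedly invertible, and define the closed-loop generator A^K = A + BK(I − DK)⁻¹C and the transfer function G(λ) = C(λI − A)⁻¹B + D for λ ∈ ρ(A). Then for every λ ∈ ρ(A): λ ∈ ρ(A^K) if and only if I − KG(λ) is boundedly invertible. -/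
/-!
Since `λ - A` is invertible, `λ - A^K = (λ - A)(1 - R(λ) B K (1 - DK)⁻¹ C)` with `R(λ) = (λ - A)⁻¹`.
Jacobson's lemma (`1 - PQ` is invertible iff `1 - QP` is) moves `R(λ) B` to the right, and the
push-through identity `K (1 - DK)⁻¹ = (1 - KD)⁻¹ K` turns the result into
`1 - (1 - KD)⁻¹ K C R(λ) B = (1 - KD)⁻¹ (1 - K G(λ))`.
-/

open ContinuousLinearMap

theorem IsUnit.isUnit_sub_iff {R : Type*} [Ring R] {u : R} (hu : IsUnit u) (x : R) :
    IsUnit (u - x) ↔ IsUnit (1 - Ring.inverse u * x) := by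
  have hfactor : u - x = u * (1 - Ring.inverse u * x) := by
    rw [mul_sub, mul_one, Ring.mul_inverse_cancel_left u x hu]
  rw [hfactor, hu.mul_left_iff]

theorem resolventSet_add_iff {R A : Type*} [CommSemiring R] [Ring A] [Algebra R A] {a : A} {r : R}
    (hr : r ∈ resolventSet R a) (f : A) :
    r ∈ resolventSet R (a + f) ↔ IsUnit (1 - resolvent a r * f) := by
  rw [resolventSet, Set.mem_ofPred_eq, ← sub_sub]
  exact hr.isUnit_sub_iff f

namespace ContinuousLinearMap

variable {𝕜 E F : Type*} [NontriviallyNormedField 𝕜]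
  [NormedAddCommGroup E] [NormedSpace 𝕜 E] [NormedAddCommGroup F] [NormedSpace 𝕜 F]

theorem isUnit_one_sub_comp_of_isUnit_one_sub_comp {P : F →L[𝕜] E} {Q : E →L[𝕜] F}
    (h : IsUnit (1 - P ∘L Q)) : IsUnit (1 - Q ∘L P) := by
  set c := Ring.inverse (1 - P ∘L Q)
  have hright : (1 - P ∘L Q) ∘L c = 1 := Ring.mul_inverse_cancel _ h
  have hleft : c ∘L (1 - P ∘L Q) = 1 := Ring.inverse_mul_cancel _ h
  refine isUnit_iff_exists.mpr ⟨1 + Q ∘L c ∘L P, ?_, ?_⟩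
  · calc (1 - Q ∘L P) * (1 + Q ∘L c ∘L P)
        = 1 + Q ∘L ((1 - P ∘L Q) ∘L c - 1) ∘L P := by
          simp only [mul_def, comp_add, sub_comp, comp_sub, one_def, id_comp, comp_id, comp_assoc]
          abel
      _ = 1 := by rw [hright, sub_self, zero_comp, comp_zero, add_zero]
  · calc (1 + Q ∘L c ∘L P) * (1 - Q ∘L P)
        = 1 + Q ∘L (c ∘L (1 - P ∘L Q) - 1) ∘L P := by
          simp only [mul_def, add_comp, sub_comp, comp_sub, one_def, id_comp, comp_id, comp_assoc]
          abel
      _ = 1 := by rw [hleft, sub_self, zero_comp, comp_zero, add_zero]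

theorem isUnit_one_sub_comp_comm (P : F →L[𝕜] E) (Q : E →L[𝕜] F) :
    IsUnit (1 - P ∘L Q) ↔ IsUnit (1 - Q ∘L P) :=
  ⟨isUnit_one_sub_comp_of_isUnit_one_sub_comp, isUnit_one_sub_comp_of_isUnit_one_sub_comp⟩

theorem comp_inverse_one_sub_comp {P : F →L[𝕜] E} {Q : E →L[𝕜] F} (h : IsUnit (1 - P ∘L Q)) :
    Q ∘L Ring.inverse (1 - P ∘L Q) = Ring.inverse (1 - Q ∘L P) ∘L Q := by
  have hleft : Ring.inverse (1 - Q ∘L P) ∘L (1 - Q ∘L P) = .id 𝕜 F :=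
    Ring.inverse_mul_cancel _ (isUnit_one_sub_comp_of_isUnit_one_sub_comp h)
  have hright : (1 - P ∘L Q) ∘L Ring.inverse (1 - P ∘L Q) = .id 𝕜 E :=
    Ring.mul_inverse_cancel _ h
  have hcomm : (1 - Q ∘L P) ∘L Q = Q ∘L (1 - P ∘L Q) := by
    simp only [comp_sub, sub_comp, one_def, id_comp, comp_id, comp_assoc]
  calc Q ∘L Ring.inverse (1 - P ∘L Q)
      = (Ring.inverse (1 - Q ∘L P) ∘L (1 - Q ∘L P)) ∘L Q ∘L Ring.inverse (1 - P ∘L Q) := by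
        rw [hleft, id_comp]
    _ = Ring.inverse (1 - Q ∘L P) ∘L Q ∘L ((1 - P ∘L Q) ∘L Ring.inverse (1 - P ∘L Q)) := by
        rw [comp_assoc, ← comp_assoc _ Q, hcomm, comp_assoc]
    _ = Ring.inverse (1 - Q ∘L P) ∘L Q := by rw [hright, comp_id]

end ContinuousLinearMap

theorem closed_loop_spectrum_characterization_general
    {X U Y : Type*}
    [NormedAddCommGroup X] [InnerProductSpace ℂ X]
    [NormedAddCommGroup U] [InnerProductSpace ℂ U]
    [NormedAddCommGroup Y] [InnerProductSpace ℂ Y]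
    (A : X →L[ℂ] X) (B : U →L[ℂ] X) (C : X →L[ℂ] Y) (D : U →L[ℂ] Y) (K : Y →L[ℂ] U)
    (hDK : IsUnit (1 - D ∘L K))
    (lam : ℂ) (hlam : lam ∈ resolventSet ℂ A) :
    lam ∈ resolventSet ℂ (A + B ∘L K ∘L Ring.inverse (1 - D ∘L K) ∘L C) ↔
      IsUnit (1 - K ∘L (C ∘L resolvent A lam ∘L B + D)) := by
  have hKD : IsUnit (1 - K ∘L D) := isUnit_one_sub_comp_of_isUnit_one_sub_comp hDK
  have hloop : 1 - K ∘L (C ∘L resolvent A lam ∘L B + D) =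
      (1 - K ∘L D) - K ∘L C ∘L resolvent A lam ∘L B := by
    rw [comp_add, sub_add_eq_sub_sub_swap]
  rw [resolventSet_add_iff hlam, hloop, hKD.isUnit_sub_iff]
  calc IsUnit (1 - resolvent A lam * (B ∘L K ∘L Ring.inverse (1 - D ∘L K) ∘L C))
      ↔ IsUnit (1 - (resolvent A lam ∘L B) ∘L K ∘L Ring.inverse (1 - D ∘L K) ∘L C) := by
        rw [mul_def, comp_assoc]
    _ ↔ IsUnit (1 - (K ∘L Ring.inverse (1 - D ∘L K)) ∘L C ∘L resolvent A lam ∘L B) := by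
        rw [isUnit_one_sub_comp_comm]; simp only [comp_assoc]
    _ ↔ IsUnit (1 - Ring.inverse (1 - K ∘L D) * (K ∘L C ∘L resolvent A lam ∘L B)) := by
        rw [comp_inverse_one_sub_comp hDK, mul_def, comp_assoc]

/-- For `λ ∈ ρ(A)`: `λ ∈ ρ(A^K)` if and only if `I − KG(λ)` is boundedly invertible, where
`A^K = A + BK(I − DK)⁻¹C` and `G(λ) = C(λI − A)⁻¹B + D`. -/
theorem closed_loop_spectrum_characterization
    {X U Y : Type*}
    [NormedAddCommGroup X] [InnerProductSpace ℂ X] [CompleteSpace X]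
    [NormedAddCommGroup U] [InnerProductSpace ℂ U] [CompleteSpace U]
    [NormedAddCommGroup Y] [InnerProductSpace ℂ Y] [CompleteSpace Y]
    (A : X →L[ℂ] X) (B : U →L[ℂ] X) (C : X →L[ℂ] Y) (D : U →L[ℂ] Y) (K : Y →L[ℂ] U)
    (hDK : IsUnit (1 - D ∘L K))
    (lam : ℂ) (hlam : lam ∈ resolventSet ℂ A) :
    lam ∈ resolventSet ℂ (A + B ∘L K ∘L Ring.inverse (1 - D ∘L K) ∘L C) ↔
      IsUnit (1 - K ∘L (C ∘L resolvent A lam ∘L B + D)) :=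
  closed_loop_spectrum_characterization_general A B C D K hDK lam hlam
end
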